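/- arXiv:1208.1799 — 2 statements merged into one kernel-verified Lean document; each statement's English description precedes it below -/
import Mathlib

section
/- Let V be a finite-dimensional complex vector space, G ⊆ GL(V) finite, γ ∈ GL(V) of finite order normalising G, ζ a root of unity, E = V(γ, ζ), and X a subspace with γX = X. Suppose there exists h in the pointwise stabiliser G_X of X such that the ζ-eigenspace of γh on the quotient V/X is zero. Then E ∩ X = V(γh, ζ). -/
namespace Module.End

variable {R M : Type*} [CommRing R] [AddCommGroup M] [Module R M]

theorem eigenspace_inf_eq_eigenspace_mul_inf {f g : End R M} {X : Submodule R M}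
    (hg : ∀ x ∈ X, g x = x) (μ : R) :
    eigenspace f μ ⊓ X = eigenspace (f * g) μ ⊓ X := by
  ext v
  simp only [Submodule.mem_inf, mem_eigenspace_iff, mul_apply]
  constructor
  · rintro ⟨hv, hvX⟩
    exact ⟨by rw [hg v hvX, hv], hvX⟩
  · rintro ⟨hv, hvX⟩
    exact ⟨by rw [← hv, hg v hvX], hvX⟩

theorem eigenspace_le_of_forall_sub_smul_mem {f : End R M} {μ : R} {X : Submodule R M}
    (hquot : ∀ v : M, f v - μ • v ∈ X → v ∈ X) : eigenspace f μ ≤ X := fun v hv =>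
  hquot v (by rw [mem_eigenspace_iff.mp hv, sub_self]; exact X.zero_mem)

end Module.End

theorem stmt_4_general (V : Type*) [AddCommGroup V] [Module ℂ V]
    (γ : V ≃ₗ[ℂ] V)
    (ζ : ℂ)
    (X : Submodule ℂ V)
    (h : V ≃ₗ[ℂ] V) (hfix : ∀ x ∈ X, h x = x)
    (hquot : ∀ v : V, (γ * h) v - ζ • v ∈ X → v ∈ X) :
    Module.End.eigenspace (↑γ : Module.End ℂ V) ζ ⊓ X =
      Module.End.eigenspace (↑(γ * h) : Module.End ℂ V) ζ := by
  rw [Module.End.eigenspace_inf_eq_eigenspace_mul_inf (f := ↑γ) hfix ζ]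
  exact inf_eq_left.mpr (Module.End.eigenspace_le_of_forall_sub_smul_mem hquot)

/-- if `γX = X`, `h ∈ G_X` and the ζ-eigenspace of `γh` on `V/X` is zero
(i.e. `(γh)v - ζv ∈ X → v ∈ X`), then `V(γ,ζ) ∩ X = V(γh,ζ)`. -/
theorem stmt_4 (V : Type*) [AddCommGroup V] [Module ℂ V] [FiniteDimensional ℂ V]
    (G : Subgroup (V ≃ₗ[ℂ] V)) [Finite G]
    (γ : V ≃ₗ[ℂ] V) (hord : IsOfFinOrder γ) (hγ : γ ∈ Subgroup.normalizer (G : Set (V ≃ₗ[ℂ] V)))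
    (ζ : ℂ) (hζ : ∃ n : ℕ, 0 < n ∧ ζ ^ n = 1)
    (X : Submodule ℂ V) (hX : X.map (↑γ : V →ₗ[ℂ] V) = X)
    (h : V ≃ₗ[ℂ] V) (hhG : h ∈ G) (hfix : ∀ x ∈ X, h x = x)
    (hquot : ∀ v : V, (γ * h) v - ζ • v ∈ X → v ∈ X) :
    Module.End.eigenspace (↑γ : Module.End ℂ V) ζ ⊓ X =
      Module.End.eigenspace (↑(γ * h) : Module.End ℂ V) ζ :=
  stmt_4_general V γ ζ X h hfix hquot
end

section
/- Let V = V₁ ⊕ γV₁ ⊕ ... ⊕ γ^{k-1}V₁ be a finite-dimensional complex vector space where γ ∈ GL(V) cyclically permutes the summands γ^i V₁ and γ^k V₁ = V₁. Let x = x₁ ⊕ γx₂γ⁻¹ ⊕ ... ⊕ γ^{k-1}x_kγ^{-(k-1)} where x_i ∈ GL(V₁) act on V₁. Then for any root of unity ζ, the map sending v = v₁ + γv₂ + ... + γ^{k-1}v_k (v_i ∈ V₁) to v₁ restricts to a vector space isomorphism V(γx, ζ) ≅ V₁(γ^k x_k x_{k-1}···x₁, ζ^k). -/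
/-!
An eigenvector `v` of `γx` for an eigenvalue `ζ ≠ 0` satisfies `ζ • v (i + 1) = x i (v i)`, hence
`v i = ζ⁻ⁱ • (x (i-1) ⋯ x 0) (v 0)`: it is determined by its head `v 0`. Conversely this formula
extends any `w` to a vector satisfying every coordinate of the eigenvector equation except the
0th, which reads `g (x n ⋯ x 0) w = ζ ^ (n + 1) • w`.
-/

section RevPartialProd

variable {G : Type*} [Monoid G] {k : ℕ}

/-- `revPartialProd x i = x (i - 1) * ⋯ * x 0`. -/
def revPartialProd (x : Fin k → G) (i : ℕ) : G := ((List.ofFn x).take i).reverse.prod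

@[simp]
theorem revPartialProd_zero (x : Fin k → G) : revPartialProd x 0 = 1 := by
  simp [revPartialProd]

theorem revPartialProd_succ (x : Fin k → G) (i : Fin k) :
    revPartialProd x (i + 1) = x i * revPartialProd x i := by
  simp [revPartialProd, List.take_add_one]

theorem revPartialProd_self (x : Fin k → G) :
    revPartialProd x k = (List.ofFn x).reverse.prod := by
  rw [revPartialProd, List.take_of_length_le (by simp)]

end RevPartialProd

theorem LinearEquiv.coe_list_prod {R V : Type*} [Semiring R] [AddCommMonoid V] [Module R V]
    (l : List (V ≃ₗ[R] V)) : (l.prod : Module.End R V) = (l.map (↑)).prod :=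
  map_list_prod LinearEquiv.automorphismGroup.toLinearMapMonoidHom l

section CyclicShift

open Module End

variable {K M : Type*} [Field K] [AddCommGroup M] [Module K M] {n : ℕ}

/-- The operator `γx` on `V₁ ⊕ γV₁ ⊕ ⋯ ⊕ γⁿV₁ ≅ Fin (n + 1) → V₁`, where `g = γ ^ (n + 1)` on `V₁`. -/
def cyclicShift (g : End K M) (x : Fin (n + 1) → End K M) : End K (Fin (n + 1) → M) :=
  LinearMap.pi <| Fin.cons (g ∘ₗ x (Fin.last n) ∘ₗ LinearMap.proj (Fin.last n))
    fun i => x i.castSucc ∘ₗ LinearMap.proj i.castSucc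

variable (g : End K M) (x : Fin (n + 1) → End K M) (ζ : K)

@[simp]
theorem cyclicShift_apply_zero (v : Fin (n + 1) → M) :
    cyclicShift g x v 0 = g (x (Fin.last n) (v (Fin.last n))) :=
  rfl

@[simp]
theorem cyclicShift_apply_succ (v : Fin (n + 1) → M) (i : Fin n) :
    cyclicShift g x v i.succ = x i.castSucc (v i.castSucc) :=
  rfl

def eigenLift : M →ₗ[K] Fin (n + 1) → M :=
  LinearMap.pi fun i => ζ⁻¹ ^ (i : ℕ) • revPartialProd x i

theorem eigenLift_apply (w : M) (i : Fin (n + 1)) :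
    eigenLift x ζ w i = ζ⁻¹ ^ (i : ℕ) • revPartialProd x i w :=
  rfl

@[simp]
theorem eigenLift_apply_zero (w : M) : eigenLift x ζ w 0 = w := by
  simp [eigenLift_apply]

variable {ζ}

theorem eq_eigenLift_of_mem_eigenspace (hζ : ζ ≠ 0) {v : Fin (n + 1) → M}
    (hv : v ∈ eigenspace (cyclicShift g x) ζ) : v = eigenLift x ζ (v 0) := by
  rw [mem_eigenspace_iff] at hv
  funext i
  induction i using Fin.induction with
  | zero => simp
  | succ i ih =>
    have hi : x i.castSucc (eigenLift x ζ (v 0) i.castSucc) = ζ • v i.succ := by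
      rw [← ih, ← cyclicShift_apply_succ, hv, Pi.smul_apply]
    have hstep : revPartialProd x (i + 1) = x i.castSucc * revPartialProd x i :=
      revPartialProd_succ x i.castSucc
    rw [← inv_smul_smul₀ hζ (v i.succ), ← hi]
    simp only [eigenLift_apply, Fin.val_succ, Fin.val_castSucc, hstep, mul_apply, map_smul,
      smul_smul, pow_succ']

theorem cyclicShift_eigenLift_apply_succ (hζ : ζ ≠ 0) (w : M) (i : Fin n) :
    cyclicShift g x (eigenLift x ζ w) i.succ = ζ • eigenLift x ζ w i.succ := by
  have hstep : revPartialProd x (i + 1) = x i.castSucc * revPartialProd x i :=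
    revPartialProd_succ x i.castSucc
  simp only [cyclicShift_apply_succ, eigenLift_apply, Fin.val_succ, Fin.val_castSucc, hstep,
    mul_apply, map_smul, smul_smul, pow_succ', ← mul_assoc, mul_inv_cancel₀ hζ, one_mul]

theorem cyclicShift_eigenLift_apply_zero (w : M) :
    cyclicShift g x (eigenLift x ζ w) 0 = ζ⁻¹ ^ n • (g * (List.ofFn x).reverse.prod) w := by
  have hlast : revPartialProd x (n + 1) = x (Fin.last n) * revPartialProd x n :=
    revPartialProd_succ x (Fin.last n)
  rw [cyclicShift_apply_zero, eigenLift_apply, map_smul, map_smul, ← revPartialProd_self, hlast,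
    Fin.val_last, mul_apply, mul_apply]

theorem eigenLift_mem_eigenspace_iff (hζ : ζ ≠ 0) (w : M) :
    eigenLift x ζ w ∈ eigenspace (cyclicShift g x) ζ ↔
      w ∈ eigenspace (g * (List.ofFn x).reverse.prod) (ζ ^ (n + 1)) := by
  simp only [mem_eigenspace_iff, funext_iff, Fin.forall_fin_succ, Pi.smul_apply,
    cyclicShift_eigenLift_apply_zero, cyclicShift_eigenLift_apply_succ g x hζ,
    eigenLift_apply_zero, implies_true, and_true]
  rw [inv_pow, inv_smul_eq_iff₀ (pow_ne_zero n hζ), smul_smul, pow_succ]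

def eigenspaceCyclicShiftEquiv (hζ : ζ ≠ 0) :
    eigenspace (cyclicShift g x) ζ ≃ₗ[K]
      eigenspace (g * (List.ofFn x).reverse.prod) (ζ ^ (n + 1)) where
  toFun v := ⟨v.1 0, (eigenLift_mem_eigenspace_iff g x hζ _).1 <|
    eq_eigenLift_of_mem_eigenspace g x hζ v.2 ▸ v.2⟩
  invFun w := ⟨eigenLift x ζ w, (eigenLift_mem_eigenspace_iff g x hζ _).2 w.2⟩
  map_add' _ _ := rfl
  map_smul' _ _ := rfl
  left_inv v := Subtype.ext (eq_eigenLift_of_mem_eigenspace g x hζ v.2).symm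
  right_inv w := Subtype.ext (eigenLift_apply_zero x ζ w)

end CyclicShift

/-- in the cyclic decomposition `V = V₁ ⊕ γV₁ ⊕ ⋯ ⊕ γ^{k-1}V₁`
(coordinatised as `Fin k → V₁`, with `g` the restriction of `γ^k` to `V₁`, and with
`γx` acting by `(γx)(v₁ + γv₂ + ⋯ + γ^{k-1}v_k) = γ^k x_k v_k + γ x₁ v₁ + ⋯ + γ^{k-1} x_{k-1} v_{k-1}`,
encoded by the operator `T`), the map `v ↦ v₁` restricts to a vector space isomorphism
`V(γx, ζ) ≅ V₁(γ^k x_k ⋯ x₁, ζ^k)`. -/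
theorem stmt_8 (k : ℕ) (hk : 0 < k) (V₁ : Type*) [AddCommGroup V₁] [Module ℂ V₁]
    (g : V₁ ≃ₗ[ℂ] V₁) (x : Fin k → (V₁ ≃ₗ[ℂ] V₁))
    (ζ : ℂ) (hζ : ∃ n : ℕ, 0 < n ∧ ζ ^ n = 1)
    (T : Module.End ℂ (Fin k → V₁))
    (hT : ∀ (v : Fin k → V₁) (i : Fin k), T v i =
      if (i : ℕ) = 0 then
        g (x ⟨k - 1, by omega⟩ (v ⟨k - 1, by omega⟩))
      else
        x ⟨(i : ℕ) - 1, by exact lt_of_le_of_lt (Nat.sub_le _ _) i.isLt⟩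
          (v ⟨(i : ℕ) - 1, by exact lt_of_le_of_lt (Nat.sub_le _ _) i.isLt⟩)) :
    ∃ e : Module.End.eigenspace T ζ ≃ₗ[ℂ]
        Module.End.eigenspace
          (↑(g * (List.ofFn x).reverse.prod) : Module.End ℂ V₁) (ζ ^ k),
      ∀ v, (e v : V₁) = (v : Fin k → V₁) ⟨0, hk⟩ := by
  obtain ⟨n, rfl⟩ : ∃ n, k = n + 1 := ⟨k - 1, by omega⟩
  have hζ0 : ζ ≠ 0 := by
    rintro rfl
    obtain ⟨m, hm, h⟩ := hζ
    simp [hm.ne'] at h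
  have hT_eq : T = cyclicShift g fun i => x i := by
    refine LinearMap.ext fun v => funext fun i => ?_
    rw [hT]
    cases i using Fin.cases with
    | zero => simp only [Fin.val_zero, if_true, Nat.add_sub_cancel]; rfl
    | succ i => simp only [Fin.val_succ, Nat.add_one_ne_zero, if_false, Nat.add_sub_cancel]; rfl
  subst hT_eq
  rw [LinearEquiv.coe_toLinearMap_mul, LinearEquiv.coe_list_prod, List.map_reverse,
    List.map_ofFn]
  exact ⟨eigenspaceCyclicShiftEquiv _ _ hζ0, fun _ => rfl⟩
end
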